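/- arXiv:1906.07420 — 5 statements merged into one kernel-verified Lean document; each statement's English description precedes it below -/
import Mathlib

section
/- Let n ≥ 1 and N ∈ ℤ with gcd(n, N) = 1, and let ξ = (ξ_1,…,ξ_n) ∈ ℤ^n with ξ_1 + ⋯ + ξ_n = N. Let c be the cyclic shift and f(ξ) = Σ_{i=1}^n (i−1)ξ_i. Then the n integers f(ξ), f(c(ξ)), f(c^2(ξ)), …, f(c^{n−1}(ξ)) form a complete residue system modulo n, i.e., they are pairwise incongruent modulo n. -/
open Finset

/-- The cyclic shift `c(x_1,…,x_n) = (x_n, x_1, …, x_{n-1})` (0-indexed). -/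
def cycShift {n : ℕ} {α : Type*} (x : Fin n → α) : Fin n → α :=
  fun i => if _h : (i : ℕ) = 0 then x ⟨n - 1, by have := i.isLt; omega⟩
           else x ⟨(i : ℕ) - 1, by have := i.isLt; omega⟩

/-- `f(ξ) = Σ_{i=1}^n (i-1)ξ_i` (0-indexed: `Σ_i i·ξ_i`). -/
def fStat {n : ℕ} (ξ : Fin n → ℤ) : ℤ := ∑ i : Fin n, ((i : ℕ) : ℤ) * ξ i

section
variable {n : ℕ} [NeZero n]

lemma cycShift_apply_add_one {α : Type*} (x : Fin n → α) (j : Fin n) :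
    cycShift x (j + 1) = x j := by
  have hj := j.isLt
  have hval : ((j + 1 : Fin n) : ℕ) = ((j : ℕ) + 1) % n := by
    simp [Fin.add_def]
  unfold cycShift
  split_ifs with h
  · rw [hval] at h
    have hj' : (j:ℕ) = n - 1 := by
      rcases Nat.lt_or_ge ((j:ℕ)+1) n with h1 | h1
      · rw [Nat.mod_eq_of_lt h1] at h; omega
      · omega
    congr 1
    exact Fin.ext hj'.symm
  · rw [hval] at h
    have h1 : (j:ℕ) + 1 < n := by
      rcases Nat.lt_or_ge ((j:ℕ)+1) n with h1 | h1
      · exact h1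
      · have : (j:ℕ) + 1 = n := by omega
        simp [this] at h
    have hv2 : ((j + 1 : Fin n) : ℕ) = (j:ℕ) + 1 := by rw [hval, Nat.mod_eq_of_lt h1]
    exact congrArg x (Fin.ext (by simp [hv2]))

lemma sum_cycShift (ξ : Fin n → ℤ) : ∑ i, cycShift ξ i = ∑ i, ξ i := by
  rw [← Equiv.sum_comp (Equiv.addRight (1 : Fin n)) (cycShift ξ)]
  exact Finset.sum_congr rfl fun j _ => cycShift_apply_add_one ξ j

lemma fStat_cycShift (ξ : Fin n → ℤ) :
    fStat (cycShift ξ) = fStat ξ + (∑ i, ξ i) - n * ξ ⟨n - 1, by have := NeZero.pos n; omega⟩ := by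
  have key : fStat (cycShift ξ) = ∑ j : Fin n, ((((j:ℕ)+1) % n : ℕ) : ℤ) * ξ j := by
    unfold fStat
    rw [← Equiv.sum_comp (Equiv.addRight (1 : Fin n)) (fun i => ((i:ℕ):ℤ) * cycShift ξ i)]
    refine Finset.sum_congr rfl fun j _ => ?_
    simp only [Equiv.coe_addRight]
    rw [cycShift_apply_add_one]
    congr 2
    simp [Fin.add_def]
  rw [key]
  have step : ∀ j : Fin n, ((((j:ℕ)+1) % n : ℕ) : ℤ) * ξ j
      = (((j:ℕ):ℤ) + 1) * ξ j - (if (j:ℕ) = n - 1 then (n:ℤ) * ξ j else 0) := by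
    intro j
    have hj := j.isLt
    by_cases hc : (j:ℕ) = n - 1
    · have : ((j:ℕ)+1) % n = 0 := by
        have : (j:ℕ) + 1 = n := by omega
        simp [this]
      rw [this]
      simp [hc]
      have hcast : ((n - 1 : ℕ) : ℤ) = (n : ℤ) - 1 := by
        have := NeZero.pos n; omega
      rw [hcast]; ring
    · have h1 : (j:ℕ) + 1 < n := by omega
      rw [Nat.mod_eq_of_lt h1]
      simp [hc]
  rw [Finset.sum_congr rfl fun j _ => step j, Finset.sum_sub_distrib]
  have hlast : ∑ j : Fin n, (if (j:ℕ) = n - 1 then (n:ℤ) * ξ j else 0)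
      = (n:ℤ) * ξ ⟨n - 1, by have := NeZero.pos n; omega⟩ := by
    rw [Finset.sum_eq_single (⟨n - 1, by have := NeZero.pos n; omega⟩ : Fin n)]
    · simp
    · intro b _ hb
      have : (b:ℕ) ≠ n - 1 := fun h => hb (Fin.ext h)
      simp [this]
    · simp
  rw [hlast]
  unfold fStat
  rw [← Finset.sum_add_distrib]
  congr 1
  refine Finset.sum_congr rfl fun j _ => ?_
  ring
end

theorem stmt4 (n : ℕ) (hn : 1 ≤ n) (N : ℤ) (hgcd : Int.gcd (n : ℤ) N = 1)
    (ξ : Fin n → ℤ) (hξ : ∑ i, ξ i = N) :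
    ∀ s t : ℕ, s < n → t < n →
      fStat (cycShift^[s] ξ) ≡ fStat (cycShift^[t] ξ) [ZMOD (n : ℤ)] → s = t := by
  haveI : NeZero n := ⟨by omega⟩
  have hsum : ∀ k, ∑ i, (cycShift^[k] ξ) i = N := by
    intro k
    induction k with
    | zero => simpa using hξ
    | succ k ih => rw [Function.iterate_succ_apply', sum_cycShift]; exact ih
  have hf : ∀ k : ℕ, fStat (cycShift^[k] ξ) ≡ fStat ξ + (k : ℤ) * N [ZMOD (n : ℤ)] := by
    intro k
    induction k with
    | zero => simp
    | succ k ih =>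
      rw [Function.iterate_succ_apply', fStat_cycShift, hsum k]
      have h0 : (n:ℤ) * (cycShift^[k] ξ) ⟨n - 1, by omega⟩ ≡ 0 [ZMOD (n:ℤ)] :=
        Int.modEq_zero_iff_dvd.mpr ⟨_, rfl⟩
      have := (ih.add_right N).sub h0
      calc fStat (cycShift^[k] ξ) + N - (n:ℤ) * (cycShift^[k] ξ) ⟨n - 1, by omega⟩
          ≡ fStat ξ + (k:ℤ) * N + N - 0 [ZMOD (n:ℤ)] := this
        _ = fStat ξ + ((k:ℕ)+1 : ℤ) * N := by ring
        _ = fStat ξ + (((k+1 : ℕ)):ℤ) * N := by push_cast; ring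
  intro s t hs ht hmod
  have h1 : fStat ξ + (s:ℤ) * N ≡ fStat ξ + (t:ℤ) * N [ZMOD (n:ℤ)] :=
    ((hf s).symm.trans hmod).trans (hf t)
  have h2 : (s:ℤ) * N ≡ (t:ℤ) * N [ZMOD (n:ℤ)] := h1.add_left_cancel' _
  have hnpos : (0:ℤ) < n := by exact_mod_cast hn
  have h3 := h2.cancel_right_div_gcd hnpos
  rw [hgcd] at h3
  simp only [Nat.cast_one, Int.ediv_one] at h3
  have hd : (n:ℤ) ∣ (t:ℤ) - (s:ℤ) := h3.dvd
  have h6 : (t:ℤ) - (s:ℤ) = 0 := Int.eq_zero_of_abs_lt_dvd hd (by rw [abs_lt]; omega)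
  omega
end

section
/- Let λ be a partition with ℓ(λ) < n and gcd(n, |λ|) = 1. Then n divides the cardinality of SSYT_n(λ). -/
open Finset

/-- Semistandard Young tableaux of shape `μ` with entries in `{0, …, n-1}`
(the 0-indexed version of entries in `{1, …, n}`). -/
def SSYTn (μ : YoungDiagram) (n : ℕ) : Type :=
  {T : SemistandardYoungTableau μ // ∀ i j : ℕ, (i, j) ∈ μ → T i j < n}

noncomputable instance (μ : YoungDiagram) (n : ℕ) : Fintype (SSYTn μ n) := by
  apply Fintype.ofInjective
    (fun (T : SSYTn μ n) (c : μ.cells) =>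
      (⟨T.1 c.1.1 c.1.2,
        Nat.lt_succ_of_lt (T.2 c.1.1 c.1.2 c.2)⟩ :
        Fin (n + 1)))
  intro T T' h
  apply Subtype.ext
  apply SemistandardYoungTableau.ext
  intro i j
  by_cases hij : (i, j) ∈ μ
  · have := congrFun h ⟨(i, j), (YoungDiagram.mem_cells _).mpr hij⟩
    simpa using congrArg Fin.val this
  · rw [T.1.zeros hij, T'.1.zeros hij]

/-- The content of a tableau: `ssytContent μ n T k` is the number of entries of `T`
equal to `k` (0-indexed). -/
def ssytContent (μ : YoungDiagram) (n : ℕ) (T : SSYTn μ n) : Fin n → ℕ :=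
  fun k => (μ.cells.filter (fun c => T.1 c.1 c.2 = (k : ℕ))).card

/-!
The Bender–Knuth involution `T ↦ T.benderKnuth i` of `SSYT_n(λ)` exchanges the numbers of
entries `i` and `i + 1`. Hence the number `E v` of entries equal to `v`, summed over all tableaux
in `SSYT_n(λ)`, is the same for every `v < n`. Counting all entries of all tableaux in two ways
gives `|λ| · #SSYT_n(λ) = n · E 0`, and `n` is coprime to `|λ|`.
-/

theorem Finset.card_filter_card_filter_lt_lt {α : Type*} [LinearOrder α] (S : Finset α) {b : ℕ}
    (hb : b ≤ #S) : #{c ∈ S | #{x ∈ S | x < c} < b} = b := by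
  set rank : α → ℕ := fun c => #{x ∈ S | x < c}
  have hinj : Set.InjOn rank S := by
    refine StrictMonoOn.injOn fun c hc c' hc' hcc' => card_lt_card ⟨?_, fun hsub => ?_⟩
    · exact monotone_filter_right S fun x _ (hx : x < c) => hx.trans hcc'
    · simpa using hsub (mem_filter.mpr ⟨hc, hcc'⟩)
  have himage : S.image rank = range #S := by
    refine eq_of_subset_of_card_le (fun k hk => ?_) (by rw [card_range, card_image_of_injOn hinj])
    obtain ⟨c, hc, rfl⟩ := mem_image.mp hk
    exact mem_range.mpr (card_lt_card (filter_ssubset.mpr ⟨c, hc, lt_irrefl c⟩))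
  calc #{c ∈ S | rank c < b} = #((S.filter (rank · < b)).image rank) :=
        (card_image_of_injOn (hinj.mono (filter_subset _ _))).symm
    _ = #{k ∈ range #S | k < b} := by rw [← filter_image (p := (· < b)), himage]
    _ = #(range b) := by
        congr 1
        ext k
        simp only [mem_filter, mem_range]
        omega
    _ = b := card_range b

lemma SemistandardYoungTableau.mem_of_ne_zero {μ : YoungDiagram} (T : SemistandardYoungTableau μ)
    {r c : ℕ} (h : T r c ≠ 0) : (r, c) ∈ μ := by
  by_contra hm
  exact h (T.zeros hm)

namespace BenderKnuth

variable {μ : YoungDiagram} (i : ℕ) (T : SemistandardYoungTableau μ)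

def IsFree (r c : ℕ) : Prop :=
  (r, c) ∈ μ ∧
    (T r c = i ∧ T (r + 1) c ≠ i + 1 ∨ T r c = i + 1 ∧ (r = 0 ∨ T (r - 1) c ≠ i))

instance (r c : ℕ) : Decidable (IsFree i T r c) := by unfold IsFree; infer_instance

def freeCols (r : ℕ) : Finset ℕ := {c ∈ range (μ.rowLen r) | IsFree i T r c}

def numLower (r : ℕ) : ℕ := #{c ∈ freeCols i T r | T r c = i}

def numUpper (r : ℕ) : ℕ := #{c ∈ freeCols i T r | T r c = i + 1}

def freeRank (r c : ℕ) : ℕ := #{c' ∈ freeCols i T r | c' < c}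

/-- Read from left to right, the free cells of row `r` hold `i ^ numLower (i + 1) ^ numUpper`;
the move rewrites them as `i ^ numUpper (i + 1) ^ numLower`. -/
def moveEntry (r c : ℕ) : ℕ :=
  if IsFree i T r c then (if freeRank i T r c < numUpper i T r then i else i + 1) else T r c

variable {i T}

lemma IsFree.mem {r c : ℕ} (h : IsFree i T r c) : (r, c) ∈ μ := h.1

lemma IsFree.val {r c : ℕ} (h : IsFree i T r c) : T r c = i ∨ T r c = i + 1 :=
  h.2.imp And.left And.left

lemma mem_freeCols {r c : ℕ} : c ∈ freeCols i T r ↔ IsFree i T r c := by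
  simp only [freeCols, mem_filter, mem_range, and_iff_right_iff_imp]
  exact fun h => YoungDiagram.mem_iff_lt_rowLen.mp h.mem

lemma below_of_not_isFree {r c : ℕ} (hm : (r, c) ∈ μ) (hv : T r c = i)
    (hnf : ¬ IsFree i T r c) : T (r + 1) c = i + 1 := by
  by_contra h
  exact hnf ⟨hm, Or.inl ⟨hv, h⟩⟩

lemma above_of_not_isFree {r c : ℕ} (hm : (r, c) ∈ μ) (hv : T r c = i + 1)
    (hnf : ¬ IsFree i T r c) : r ≠ 0 ∧ T (r - 1) c = i := by
  by_contra h
  exact hnf ⟨hm, Or.inr ⟨hv, not_and_or.mp h |>.imp not_not.mp id⟩⟩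

lemma not_isFree_of_above {r c : ℕ} (ha : T r c = i) (hb : T (r + 1) c = i + 1) :
    ¬ IsFree i T (r + 1) c := by
  rintro ⟨-, ⟨hx, -⟩ | ⟨-, hy | hy⟩⟩ <;> simp_all

lemma moveEntry_of_not_isFree {r c : ℕ} (h : ¬ IsFree i T r c) : moveEntry i T r c = T r c :=
  if_neg h

lemma moveEntry_of_isFree {r c : ℕ} (h : IsFree i T r c) :
    moveEntry i T r c = if freeRank i T r c < numUpper i T r then i else i + 1 :=
  if_pos h

lemma moveEntry_eq_or_of_isFree {r c : ℕ} (h : IsFree i T r c) :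
    moveEntry i T r c = i ∨ moveEntry i T r c = i + 1 := by
  rw [moveEntry_of_isFree h]
  split <;> simp

lemma moveEntry_of_ne {r c : ℕ} (h₁ : T r c ≠ i) (h₂ : T r c ≠ i + 1) :
    moveEntry i T r c = T r c :=
  moveEntry_of_not_isFree fun hf => hf.val.elim h₁ h₂

lemma freeRank_lt_freeRank {r c c' : ℕ} (hc : IsFree i T r c) (hcc' : c < c') :
    freeRank i T r c < freeRank i T r c' := by
  refine card_lt_card ⟨fun x hx => ?_, fun hsub => ?_⟩
  · simp only [mem_filter] at hx ⊢
    exact ⟨hx.1, hx.2.trans hcc'⟩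
  have := hsub (mem_filter.mpr ⟨mem_freeCols.mpr hc, hcc'⟩)
  simp at this

lemma moveEntry_le_moveEntry_succ {r c : ℕ} (hm : (r, c + 1) ∈ μ) :
    moveEntry i T r c ≤ moveEntry i T r (c + 1) := by
  have hm0 : (r, c) ∈ μ := μ.up_left_mem le_rfl (Nat.le_add_right c 1) hm
  have huv : T r c ≤ T r (c + 1) := T.row_weak (Nat.lt_add_one c) hm
  by_cases hfu : IsFree i T r c <;> by_cases hfv : IsFree i T r (c + 1)
  · have := freeRank_lt_freeRank hfu (Nat.lt_add_one c)
    rw [moveEntry_of_isFree hfu, moveEntry_of_isFree hfv]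
    split <;> split <;> omega
  · -- an unfree `i` at `(r, c + 1)` has an `i + 1` below it, which would make `(r, c)` unfree
    have hv : T r (c + 1) ≠ i := by
      intro hv
      have hb : T (r + 1) (c + 1) = i + 1 := below_of_not_isFree hm hv hfv
      have hmb : (r + 1, c + 1) ∈ μ := T.mem_of_ne_zero (by omega)
      have h1 : T (r + 1) c ≤ T (r + 1) (c + 1) := T.row_weak (Nat.lt_add_one c) hmb
      have h2 : T r c < T (r + 1) c :=
        T.col_strict (Nat.lt_add_one r) (μ.up_left_mem le_rfl (Nat.le_add_right c 1) hmb)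
      rcases hfu.2 with ⟨hx, hy⟩ | ⟨hx, -⟩ <;> omega
    rw [moveEntry_of_isFree hfu, moveEntry_of_not_isFree hfv]
    rcases hfu.val with h | h <;> split <;> omega
  · -- an unfree `i + 1` at `(r, c)` has an `i` above it, which would make `(r, c + 1)` unfree
    rw [moveEntry_of_not_isFree hfu, moveEntry_of_isFree hfv]
    suffices h : T r c ≤ i by split <;> omega
    by_contra! h
    have hu : T r c = i + 1 := by rcases hfv.val with h' | h' <;> omega
    obtain ⟨hr0, habove⟩ := above_of_not_isFree hm0 hu hfu
    have h1 : T (r - 1) (c + 1) < T r (c + 1) := T.col_strict (by omega) hm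
    have h2 : T (r - 1) c ≤ T (r - 1) (c + 1) :=
      T.row_weak (Nat.lt_add_one c) (μ.up_left_mem (r.sub_le 1) le_rfl hm)
    rcases hfv.2 with ⟨hx, -⟩ | ⟨hx, hy | hy⟩ <;> omega
  · rwa [moveEntry_of_not_isFree hfu, moveEntry_of_not_isFree hfv]

lemma moveEntry_lt_moveEntry_succ {r c : ℕ} (hm : (r + 1, c) ∈ μ) :
    moveEntry i T r c < moveEntry i T (r + 1) c := by
  have huv : T r c < T (r + 1) c := T.col_strict (Nat.lt_add_one r) hm
  have hle : moveEntry i T r c ≤ max (T r c) (i + 1) := by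
    by_cases hf : IsFree i T r c
    · rcases moveEntry_eq_or_of_isFree hf with h | h <;> omega
    · rw [moveEntry_of_not_isFree hf]; omega
  have hge : min (T (r + 1) c) i ≤ moveEntry i T (r + 1) c := by
    by_cases hf : IsFree i T (r + 1) c
    · rcases moveEntry_eq_or_of_isFree hf with h | h <;> omega
    · rw [moveEntry_of_not_isFree hf]; omega
  by_cases h₁ : T r c = i ∨ T r c = i + 1 <;>
    by_cases h₂ : T (r + 1) c = i ∨ T (r + 1) c = i + 1
  · have hu : T r c = i ∧ T (r + 1) c = i + 1 := by omega
    rw [moveEntry_of_not_isFree (not_isFree_of_above hu.1 hu.2), moveEntry_of_not_isFree ?_]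
    · exact huv
    · rintro ⟨-, ⟨-, hb⟩ | ⟨hx, -⟩⟩ <;> omega
  · rw [moveEntry_of_ne (r := r + 1) (by omega) (by omega)]
    omega
  · rw [moveEntry_of_ne (r := r) (by omega) (by omega)]
    omega
  · rw [moveEntry_of_ne (by omega) (by omega), moveEntry_of_ne (by omega) (by omega)]
    exact huv

lemma card_filter_and_isFree (P : ℕ → ℕ → Prop) [∀ r c, Decidable (P r c)] :
    #{x ∈ μ.cells | P x.1 x.2 ∧ IsFree i T x.1 x.2}
      = ∑ r ∈ range (μ.colLen 0), #{c ∈ freeCols i T r | P r c} := by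
  rw [card_eq_sum_card_fiberwise (f := Prod.fst) (t := range (μ.colLen 0))]
  · refine sum_congr rfl fun r _ => card_nbij' Prod.snd (fun c => (r, c)) ?_ ?_ ?_ ?_
    · rintro ⟨r', c⟩ hx
      simp only [mem_coe, mem_filter, YoungDiagram.mem_cells] at hx
      obtain ⟨⟨-, hP, hf⟩, rfl⟩ := hx
      simpa [mem_freeCols] using ⟨hf, hP⟩
    · intro c hc
      simp only [mem_coe, mem_filter, mem_freeCols] at hc
      simpa using ⟨hc.1.mem, hc.2, hc.1⟩
    · rintro ⟨r', c⟩ hx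
      simp only [mem_coe, mem_filter] at hx
      simp [hx.2]
    · intro c _
      rfl
  · rintro ⟨r, c⟩ hx
    simp only [mem_coe, mem_filter, YoungDiagram.mem_cells] at hx
    simpa [← YoungDiagram.mem_iff_lt_colLen] using μ.up_left_mem le_rfl c.zero_le hx.1

/-- An unfree `i` always sits directly above an unfree `i + 1`. -/
lemma card_filter_eq_and_not_isFree :
    #{x ∈ μ.cells | T x.1 x.2 = i ∧ ¬ IsFree i T x.1 x.2}
      = #{x ∈ μ.cells | T x.1 x.2 = i + 1 ∧ ¬ IsFree i T x.1 x.2} := by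
  refine card_nbij' (fun x => (x.1 + 1, x.2)) (fun x => (x.1 - 1, x.2)) ?_ ?_ ?_ ?_
  · rintro ⟨r, c⟩ hx
    simp only [mem_coe, mem_filter, YoungDiagram.mem_cells] at hx ⊢
    obtain ⟨hm, hv, hnf⟩ := hx
    have hb := below_of_not_isFree hm hv hnf
    exact ⟨T.mem_of_ne_zero (by omega), hb, not_isFree_of_above hv hb⟩
  · rintro ⟨r, c⟩ hx
    simp only [mem_coe, mem_filter, YoungDiagram.mem_cells] at hx ⊢
    obtain ⟨hm, hv, hnf⟩ := hx
    obtain ⟨hr, ha⟩ := above_of_not_isFree hm hv hnf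
    refine ⟨μ.up_left_mem (r.sub_le 1) le_rfl hm, ha, fun hf => ?_⟩
    rcases hf.2 with ⟨-, hy⟩ | ⟨hx, -⟩
    · exact hy (by rwa [Nat.sub_add_cancel (Nat.pos_of_ne_zero hr)])
    · omega
  · rintro ⟨r, c⟩ -
    simp
  · rintro ⟨r, c⟩ hx
    simp only [mem_coe, mem_filter, YoungDiagram.mem_cells] at hx
    have hr := (above_of_not_isFree hx.1 hx.2.1 hx.2.2).1
    simp only [Prod.mk.injEq, and_true]
    omega

end BenderKnuth

namespace SemistandardYoungTableau

open BenderKnuth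

variable {μ : YoungDiagram}

def benderKnuth (i : ℕ) (T : SemistandardYoungTableau μ) : SemistandardYoungTableau μ where
  entry := moveEntry i T
  row_weak' {r c₁ c₂} hc hm :=
    monotoneOn_of_le_succ (f := fun c => moveEntry i T r c) Set.ordConnected_Iic
      (fun _ _ _ hc => moveEntry_le_moveEntry_succ (μ.up_left_mem le_rfl hc hm))
      (Set.mem_Iic.mpr hc.le) Set.self_mem_Iic hc.le
  col_strict' {r₁ r₂ c} hr hm :=
    strictMonoOn_of_lt_succ (f := fun r => moveEntry i T r c) Set.ordConnected_Iic
      (fun _ _ _ hr => moveEntry_lt_moveEntry_succ (μ.up_left_mem hr le_rfl hm))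
      (Set.mem_Iic.mpr hr.le) Set.self_mem_Iic hr
  zeros' hm := by rw [moveEntry_of_not_isFree fun h => hm h.mem, T.zeros hm]

variable {i : ℕ} {T : SemistandardYoungTableau μ}

@[simp]
lemma benderKnuth_apply (r c : ℕ) : T.benderKnuth i r c = moveEntry i T r c := rfl

lemma benderKnuth_lt {n : ℕ} (hi : i + 1 < n) (hT : ∀ r c, (r, c) ∈ μ → T r c < n)
    {r c : ℕ} (hm : (r, c) ∈ μ) : T.benderKnuth i r c < n := by
  rw [benderKnuth_apply]
  by_cases hf : IsFree i T r c
  · rcases moveEntry_eq_or_of_isFree hf with h | h <;> omega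
  · rw [moveEntry_of_not_isFree hf]
    exact hT r c hm

end SemistandardYoungTableau

namespace BenderKnuth

variable {μ : YoungDiagram} {i : ℕ} {T : SemistandardYoungTableau μ}

lemma isFree_benderKnuth {r c : ℕ} (h : IsFree i T r c) : IsFree i (T.benderKnuth i) r c := by
  have hbelow : moveEntry i T (r + 1) c ≠ i + 1 := by
    by_cases hmb : (r + 1, c) ∈ μ
    · have h₁ : T r c < T (r + 1) c := T.col_strict (Nat.lt_add_one r) hmb
      by_cases hv : T (r + 1) c = i + 1
      · rcases h.2 with ⟨-, hy⟩ | ⟨hx, -⟩ <;> omega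
      · rcases h.val with h₂ | h₂ <;> rw [moveEntry_of_ne (by omega) hv] <;> omega
    · rw [moveEntry_of_not_isFree fun hf => hmb hf.mem, T.zeros hmb]
      omega
  have habove : r = 0 ∨ moveEntry i T (r - 1) c ≠ i := by
    refine or_iff_not_imp_left.mpr fun hr => ?_
    have h₁ : T (r - 1) c < T r c := T.col_strict (by omega) h.mem
    by_cases hv : T (r - 1) c = i
    · rcases h.2 with ⟨hx, -⟩ | ⟨hx, hy | hy⟩ <;> omega
    · rcases h.val with h₂ | h₂ <;> rw [moveEntry_of_ne hv (by omega)] <;> omega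
  refine ⟨h.mem, ?_⟩
  rcases moveEntry_eq_or_of_isFree h with hv | hv
  · exact Or.inl ⟨hv, hbelow⟩
  · exact Or.inr ⟨hv, habove⟩

lemma isFree_of_isFree_benderKnuth {r c : ℕ} (h : IsFree i (T.benderKnuth i) r c) :
    IsFree i T r c := by
  by_contra hnf
  have heq : T.benderKnuth i r c = T r c := moveEntry_of_not_isFree hnf
  rcases heq ▸ h.val with hu | hu
  · have hb : T (r + 1) c = i + 1 := below_of_not_isFree h.mem hu hnf
    have hb' : T.benderKnuth i (r + 1) c = i + 1 := by
      rw [SemistandardYoungTableau.benderKnuth_apply,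
        moveEntry_of_not_isFree (not_isFree_of_above hu hb), hb]
    rcases h.2 with ⟨-, hy⟩ | ⟨hx, -⟩ <;> omega
  · obtain ⟨hr0, ha⟩ := above_of_not_isFree h.mem hu hnf
    have hr : r - 1 + 1 = r := Nat.sub_add_cancel (Nat.pos_of_ne_zero hr0)
    have hnfa : ¬ IsFree i T (r - 1) c := by
      rintro ⟨-, ⟨-, hy⟩ | ⟨hx, -⟩⟩ <;> simp_all
    have ha' : T.benderKnuth i (r - 1) c = i := by
      rw [SemistandardYoungTableau.benderKnuth_apply, moveEntry_of_not_isFree hnfa, ha]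
    rcases h.2 with ⟨hx, -⟩ | ⟨-, hy | hy⟩ <;> omega

lemma isFree_benderKnuth_iff {r c : ℕ} : IsFree i (T.benderKnuth i) r c ↔ IsFree i T r c :=
  ⟨isFree_of_isFree_benderKnuth, isFree_benderKnuth⟩

lemma freeCols_benderKnuth (r : ℕ) : freeCols i (T.benderKnuth i) r = freeCols i T r := by
  ext c
  rw [mem_freeCols, mem_freeCols, isFree_benderKnuth_iff]

lemma freeRank_benderKnuth (r c : ℕ) : freeRank i (T.benderKnuth i) r c = freeRank i T r c := by
  rw [freeRank, freeRank, freeCols_benderKnuth]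

lemma numLower_add_numUpper (r : ℕ) : numLower i T r + numUpper i T r = #(freeCols i T r) := by
  rw [numLower, numUpper,
    ← card_filter_add_card_filter_not (s := freeCols i T r) (p := fun c => T r c = i)]
  congr 2
  refine filter_congr fun c hc => ?_
  rcases (mem_freeCols.mp hc).val with h | h <;> simp [h]

lemma card_filter_moveEntry_eq (r : ℕ) :
    #{c ∈ freeCols i T r | moveEntry i T r c = i} = numUpper i T r := by
  have hupper : numUpper i T r ≤ #(freeCols i T r) := card_filter_le _ _
  rw [← card_filter_card_filter_lt_lt _ hupper]
  congr 1
  refine filter_congr fun c hc => ?_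
  rw [moveEntry_of_isFree (mem_freeCols.mp hc)]
  split_ifs with h <;> simpa [freeRank] using h

lemma numUpper_benderKnuth (r : ℕ) : numUpper i (T.benderKnuth i) r = numLower i T r := by
  have hupper : numUpper i (T.benderKnuth i) r
      = #{c ∈ freeCols i T r | ¬ moveEntry i T r c = i} := by
    rw [numUpper, freeCols_benderKnuth]
    refine congrArg card (filter_congr fun c hc => ?_)
    rcases moveEntry_eq_or_of_isFree (mem_freeCols.mp hc) with h | h <;> simp [h]
  have hsplit := card_filter_add_card_filter_not (s := freeCols i T r)
    (p := fun c => moveEntry i T r c = i)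
  rw [card_filter_moveEntry_eq] at hsplit
  have := numLower_add_numUpper (i := i) (T := T) r
  omega

lemma freeRank_lt_numLower {r c : ℕ} (hc : IsFree i T r c) (hv : T r c = i) :
    freeRank i T r c < numLower i T r := by
  have hsub : {x ∈ freeCols i T r | x < c} ⊆ {x ∈ freeCols i T r | T r x = i}.erase c := by
    intro x hx
    obtain ⟨hxf, hxc⟩ := mem_filter.mp hx
    have := T.row_weak hxc hc.mem
    rcases (mem_freeCols.mp hxf).val with h | h
    · exact mem_erase.mpr ⟨hxc.ne, mem_filter.mpr ⟨hxf, h⟩⟩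
    · omega
  exact (card_le_card hsub).trans_lt
    (card_erase_lt_of_mem (mem_filter.mpr ⟨mem_freeCols.mpr hc, hv⟩))

lemma numLower_le_freeRank {r c : ℕ} (hv : T r c = i + 1) :
    numLower i T r ≤ freeRank i T r c := by
  refine card_le_card fun x hx => ?_
  obtain ⟨hxf, hxv⟩ := mem_filter.mp hx
  refine mem_filter.mpr ⟨hxf, lt_of_not_ge fun hcx => ?_⟩
  have := T.row_weak_of_le hcx (mem_freeCols.mp hxf).mem
  omega

end BenderKnuth

namespace SemistandardYoungTableau

open BenderKnuth

variable {μ : YoungDiagram} {i : ℕ} {T : SemistandardYoungTableau μ}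

lemma benderKnuth_benderKnuth : (T.benderKnuth i).benderKnuth i = T := by
  ext r c
  rw [benderKnuth_apply]
  by_cases hf : IsFree i T r c
  · rw [moveEntry_of_isFree (isFree_benderKnuth hf), freeRank_benderKnuth, numUpper_benderKnuth]
    rcases hf.val with hv | hv
    · rw [if_pos (freeRank_lt_numLower hf hv), hv]
    · rw [if_neg (numLower_le_freeRank hv).not_gt, hv]
  · rw [moveEntry_of_not_isFree (isFree_benderKnuth_iff.not.mpr hf), benderKnuth_apply,
      moveEntry_of_not_isFree hf]

def entryCount (T : SemistandardYoungTableau μ) (v : ℕ) : ℕ :=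
  #{x ∈ μ.cells | T x.1 x.2 = v}

lemma entryCount_benderKnuth : (T.benderKnuth i).entryCount i = T.entryCount (i + 1) := by
  have hfree : #{x ∈ μ.cells | T.benderKnuth i x.1 x.2 = i ∧ IsFree i T x.1 x.2}
      = #{x ∈ μ.cells | T x.1 x.2 = i + 1 ∧ IsFree i T x.1 x.2} := by
    rw [card_filter_and_isFree (P := fun r c => T.benderKnuth i r c = i),
      card_filter_and_isFree (P := fun r c => T r c = i + 1)]
    exact sum_congr rfl fun r _ => card_filter_moveEntry_eq r
  have hfixed : #{x ∈ μ.cells | T.benderKnuth i x.1 x.2 = i ∧ ¬ IsFree i T x.1 x.2}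
      = #{x ∈ μ.cells | T x.1 x.2 = i ∧ ¬ IsFree i T x.1 x.2} := by
    refine congrArg card (filter_congr fun x _ => ?_)
    by_cases hf : IsFree i T x.1 x.2 <;> simp [hf, moveEntry_of_not_isFree]
  rw [entryCount, entryCount,
    ← card_filter_add_card_filter_not (s := {x ∈ μ.cells | T x.1 x.2 = i + 1})
      (p := fun x => IsFree i T x.1 x.2),
    ← card_filter_add_card_filter_not (s := {x ∈ μ.cells | T.benderKnuth i x.1 x.2 = i})
      (p := fun x => IsFree i T x.1 x.2),
    filter_filter, filter_filter, filter_filter, filter_filter, hfree, hfixed,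
    card_filter_eq_and_not_isFree]

end SemistandardYoungTableau

namespace SSYTn

open SemistandardYoungTableau

variable {μ : YoungDiagram} {n : ℕ}

def benderKnuth (i : ℕ) (hi : i + 1 < n) : Equiv.Perm (SSYTn μ n) :=
  Function.Involutive.toPerm (fun T => ⟨T.1.benderKnuth i, fun _ _ => benderKnuth_lt hi T.2⟩)
    fun _ => Subtype.ext benderKnuth_benderKnuth

lemma sum_entryCount_succ {i : ℕ} (hi : i + 1 < n) :
    ∑ T : SSYTn μ n, T.1.entryCount (i + 1) = ∑ T : SSYTn μ n, T.1.entryCount i :=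
  calc ∑ T : SSYTn μ n, T.1.entryCount (i + 1)
      = ∑ T : SSYTn μ n, (benderKnuth i hi T).1.entryCount i :=
        sum_congr rfl fun _ _ => entryCount_benderKnuth.symm
    _ = ∑ T : SSYTn μ n, T.1.entryCount i :=
        Equiv.sum_comp _ fun T : SSYTn μ n => T.1.entryCount i

lemma sum_entryCount_eq_sum_entryCount_zero {v : ℕ} (hv : v < n) :
    ∑ T : SSYTn μ n, T.1.entryCount v = ∑ T : SSYTn μ n, T.1.entryCount 0 := by
  induction v with
  | zero => rfl
  | succ v ih => rw [sum_entryCount_succ hv, ih (by omega)]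

lemma sum_range_entryCount (T : SSYTn μ n) : ∑ v ∈ range n, T.1.entryCount v = μ.card :=
  (card_eq_sum_card_fiberwise fun x hx => mem_range.mpr (T.2 x.1 x.2 ((μ.mem_cells x).mp hx))).symm

lemma card_mul_card_eq_mul_sum :
    μ.card * Fintype.card (SSYTn μ n) = n * ∑ T : SSYTn μ n, T.1.entryCount 0 :=
  calc μ.card * Fintype.card (SSYTn μ n)
      = ∑ T : SSYTn μ n, ∑ v ∈ range n, T.1.entryCount v := by
        simp only [sum_range_entryCount, sum_const, card_univ, smul_eq_mul, mul_comm]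
    _ = ∑ v ∈ range n, ∑ T : SSYTn μ n, T.1.entryCount v := sum_comm
    _ = n * ∑ T : SSYTn μ n, T.1.entryCount 0 := by
        rw [sum_congr rfl fun v hv => sum_entryCount_eq_sum_entryCount_zero (mem_range.mp hv),
          sum_const, card_range, smul_eq_mul]

end SSYTn

theorem stmt7_general (n : ℕ) (μ : YoungDiagram)
    (hgcd : Nat.Coprime n μ.card) :
    n ∣ Fintype.card (SSYTn μ n) :=
  hgcd.dvd_of_dvd_mul_left (Dvd.intro _ SSYTn.card_mul_card_eq_mul_sum.symm)

theorem stmt7 (n : ℕ) (μ : YoungDiagram) (hlen : μ.colLen 0 < n)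
    (hgcd : Nat.Coprime n μ.card) :
    n ∣ Fintype.card (SSYTn μ n) :=
  stmt7_general n μ hgcd
end

section
/- Let λ be a partition with ℓ(λ) < n and gcd(n, |λ|) = 1, and let g : SSYT_n(λ) → SSYT_n(λ) be a bijection with g^n = id and cont(g(T)) = c(cont(T)) for all T, where c is the cyclic shift. Let ω = e^{2πi/n} ∈ ℂ. Then for every integer k, #{T ∈ SSYT_n(λ) : g^k(T) = T} = ω^{−k·κ(λ)} · Σ_{T ∈ SSYT_n(λ)} ω^{k·Σ_{i=1}^n (i−1)c_i(T)}. In other words, the triple (SSYT_n(λ), ⟨g⟩, q^{−κ(λ)} s_λ(1, q, …, q^{n−1})) exhibits the cyclic sieving phenomenon. -/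
open Finset

/-- `κ(λ) = Σ_{i ≥ 1} (i-1)λ_i` (0-indexed rows; `μ.colLen 0` is the number of rows). -/
def kappa (μ : YoungDiagram) : ℕ := ∑ i ∈ Finset.range (μ.colLen 0), i * μ.rowLen i

lemma cycShift_sum {n : ℕ} (hn : 0 < n) (x : Fin n → ℕ) :
    (∑ i : Fin n, (i : ℕ) * cycShift x i) + n * x ⟨n - 1, by omega⟩
      = (∑ i : Fin n, (i : ℕ) * x i) + ∑ i : Fin n, x i := by
  have : NeZero n := ⟨hn.ne'⟩
  have h1 : ∑ i : Fin n, (i : ℕ) * cycShift x i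
      = ∑ j : Fin n, (((j : ℕ) + 1) % n) * x j := by
    rw [← Equiv.sum_comp (Equiv.addRight (1 : Fin n))
      (fun i : Fin n => (i : ℕ) * cycShift x i)]
    refine Finset.sum_congr rfl fun j _ => ?_
    have hval : ((j + 1 : Fin n) : ℕ) = ((j : ℕ) + 1) % n := by
      rw [Fin.val_add, Fin.val_one' n, Nat.add_mod_mod]
    have hcyc : cycShift x (j + 1) = x j := by
      unfold cycShift
      by_cases hj : (j : ℕ) = n - 1
      · have h0 : ((j + 1 : Fin n) : ℕ) = 0 := by
          rw [hval, hj, Nat.sub_add_cancel hn, Nat.mod_self]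
        rw [dif_pos h0]
        congr 1
        exact Fin.ext (by simp [hj])
      · have h0 : ((j + 1 : Fin n) : ℕ) = (j : ℕ) + 1 := by
          rw [hval]; have := j.isLt; exact Nat.mod_eq_of_lt (by omega)
        rw [dif_neg (by omega)]
        congr 1
        exact Fin.ext (by simp [h0])
    show ((j + 1 : Fin n) : ℕ) * cycShift x (j + 1) = ((j : ℕ) + 1) % n * x j
    rw [hcyc, hval]
  rw [h1]
  have h2 : ∀ j : Fin n, (((j : ℕ) + 1) % n) * x j
      + (if j = (⟨n - 1, by omega⟩ : Fin n) then n * x j else 0)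
      = ((j : ℕ) + 1) * x j := by
    intro j
    by_cases hj : j = (⟨n - 1, by omega⟩ : Fin n)
    · rw [if_pos hj]
      have : (j : ℕ) = n - 1 := by rw [hj]
      have : ((j : ℕ) + 1) % n = 0 := by
        rw [this]
        have : n - 1 + 1 = n := by omega
        rw [this, Nat.mod_self]
      rw [this, zero_mul, zero_add]
      have hjv : (j : ℕ) = n - 1 := by rw [hj]
      congr 1
      omega
    · rw [if_neg hj]
      have hjv : (j : ℕ) ≠ n - 1 := fun h => hj (Fin.ext h)
      have := j.isLt
      rw [Nat.mod_eq_of_lt (by omega), add_zero]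
  calc (∑ j : Fin n, (((j : ℕ) + 1) % n) * x j) + n * x ⟨n - 1, by omega⟩
      = ∑ j : Fin n, ((((j : ℕ) + 1) % n) * x j
          + (if j = (⟨n - 1, by omega⟩ : Fin n) then n * x j else 0)) := by
        rw [Finset.sum_add_distrib, Finset.sum_ite_eq' Finset.univ
          (⟨n - 1, by omega⟩ : Fin n) (fun j => n * x j), if_pos (Finset.mem_univ _)]
    _ = ∑ j : Fin n, ((j : ℕ) + 1) * x j := Finset.sum_congr rfl fun j _ => h2 j
    _ = (∑ i : Fin n, (i : ℕ) * x i) + ∑ i : Fin n, x i := by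
        rw [← Finset.sum_add_distrib]
        exact Finset.sum_congr rfl fun j _ => by ring

lemma sum_ssytContent {n : ℕ} (hn : 0 < n) (μ : YoungDiagram) (T : SSYTn μ n) :
    ∑ k : Fin n, ssytContent μ n T k = μ.card := by
  unfold ssytContent
  rw [YoungDiagram.card,
    Finset.card_eq_sum_card_fiberwise
      (f := fun c : ℕ × ℕ => (⟨T.1 c.1 c.2 % n, Nat.mod_lt _ hn⟩ : Fin n))
      (t := Finset.univ) (fun c _ => Finset.mem_univ _)]
  refine Finset.sum_congr rfl fun k _ => ?_
  refine congrArg Finset.card (Finset.filter_congr fun c hc => ?_)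
  have hlt := T.2 c.1 c.2 ((YoungDiagram.mem_cells c).mp hc)
  constructor
  · intro h
    exact Fin.ext (by simp [h, Nat.mod_eq_of_lt (h ▸ hlt)])
  · intro h
    have := congrArg Fin.val h
    simpa [Nat.mod_eq_of_lt hlt] using this

/-- weight of a tableau -/
def ssytW {n : ℕ} {μ : YoungDiagram} (T : SSYTn μ n) : ℕ :=
  ∑ i : Fin n, (i : ℕ) * ssytContent μ n T i

lemma w_shift {n : ℕ} (hn : 0 < n) (μ : YoungDiagram)
    (g : Equiv.Perm (SSYTn μ n))
    (hg : ∀ T, ssytContent μ n (g T) = cycShift (ssytContent μ n T))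
    (T : SSYTn μ n) :
    Nat.ModEq n (ssytW (g T)) (ssytW T + μ.card) := by
  have h := cycShift_sum hn (ssytContent μ n T)
  have hW : ssytW (g T) + n * (ssytContent μ n T ⟨n - 1, by omega⟩)
      = ssytW T + μ.card := by
    unfold ssytW
    rw [hg T, h, sum_ssytContent hn]
  have h0 : Nat.ModEq n 0 (n * (ssytContent μ n T ⟨n - 1, by omega⟩)) :=
    (Nat.modEq_zero_iff_dvd.mpr (dvd_mul_right n _)).symm
  calc ssytW (g T) = ssytW (g T) + 0 := (Nat.add_zero _).symm
    _ ≡ ssytW (g T) + n * (ssytContent μ n T ⟨n - 1, by omega⟩) [MOD n] :=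
        Nat.ModEq.add_left _ h0
    _ = ssytW T + μ.card := hW

lemma w_shift_pow {n : ℕ} (hn : 0 < n) (μ : YoungDiagram)
    (g : Equiv.Perm (SSYTn μ n))
    (hg : ∀ T, ssytContent μ n (g T) = cycShift (ssytContent μ n T))
    (T : SSYTn μ n) (j : ℕ) :
    Nat.ModEq n (ssytW ((g ^ j) T)) (ssytW T + j * μ.card) := by
  induction j with
  | zero => simp [Nat.ModEq.refl]
  | succ j ih =>
    have hpow : (g ^ (j + 1)) T = g ((g ^ j) T) := by
      rw [pow_succ' g j]; rfl
    rw [hpow]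
    calc ssytW (g ((g ^ j) T)) ≡ ssytW ((g ^ j) T) + μ.card [MOD n] :=
          w_shift hn μ g hg _
      _ ≡ (ssytW T + j * μ.card) + μ.card [MOD n] := ih.add_right _
      _ = ssytW T + (j + 1) * μ.card := by ring

lemma fixed_dvd {n : ℕ} (hn : 0 < n) (μ : YoungDiagram)
    (hgcd : Nat.Coprime n μ.card)
    (g : Equiv.Perm (SSYTn μ n)) (hgn : g ^ n = 1)
    (hg : ∀ T, ssytContent μ n (g T) = cycShift (ssytContent μ n T))
    (k : ℤ) (T : SSYTn μ n) (hT : (g ^ k) T = T) : (n : ℤ) ∣ k := by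
  set r : ℕ := (k % (n : ℤ)).toNat with hr
  have h0 : (0 : ℤ) ≤ k % (n : ℤ) := Int.emod_nonneg k (by exact_mod_cast hn.ne')
  have hlt : k % (n : ℤ) < (n : ℤ) := Int.emod_lt_of_pos k (by exact_mod_cast hn)
  have hkey : g ^ k = g ^ r := by
    conv_lhs => rw [← Int.mul_ediv_add_emod k (n : ℤ)]
    rw [zpow_add, zpow_mul, zpow_natCast, hgn, one_zpow, one_mul,
      ← Int.toNat_of_nonneg h0, zpow_natCast]
  rw [hkey] at hT
  -- n ∣ r * μ.card
  have hmod := w_shift_pow hn μ g hg T r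
  rw [hT] at hmod
  have h2 : Nat.ModEq n (ssytW T + 0) (ssytW T + r * μ.card) := by
    simpa using hmod
  have hdvd : n ∣ r * μ.card :=
    Nat.modEq_zero_iff_dvd.mp (Nat.ModEq.add_left_cancel' (ssytW T) h2).symm
  have hnr : n ∣ r := Nat.Coprime.dvd_of_dvd_mul_right hgcd hdvd
  have hrlt : r < n := by omega
  have hr0 : r = 0 := Nat.eq_zero_of_dvd_of_lt hnr hrlt
  exact Int.dvd_of_emod_eq_zero (by omega)

theorem stmt10 (n : ℕ) (μ : YoungDiagram) (hlen : μ.colLen 0 < n)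
    (hgcd : Nat.Coprime n μ.card)
    (g : Equiv.Perm (SSYTn μ n)) (hgn : g ^ n = 1)
    (hg : ∀ T, ssytContent μ n (g T) = cycShift (ssytContent μ n T)) :
    ∀ k : ℤ,
      ((Nat.card {T : SSYTn μ n // (g ^ k) T = T}) : ℂ)
        = (Complex.exp (2 * Real.pi * Complex.I / (n : ℂ))) ^ (-(k * (kappa μ : ℤ)))
          * ∑ T : SSYTn μ n,
              (Complex.exp (2 * Real.pi * Complex.I / (n : ℂ)))
                ^ (k * ((∑ i : Fin n, (i : ℕ) * ssytContent μ n T i : ℕ) : ℤ)) := by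
  intro k
  have hn : 0 < n := by omega
  set ω : ℂ := Complex.exp (2 * Real.pi * Complex.I / (n : ℂ)) with hω
  have hprim : IsPrimitiveRoot ω n := Complex.isPrimitiveRoot_exp n hn.ne'
  have hω0 : ω ≠ 0 := Complex.exp_ne_zero _
  have hωn : ω ^ (n : ℤ) = 1 := by
    rw [zpow_natCast]; exact hprim.pow_eq_one
  have hcong : ∀ a b : ℤ, (n : ℤ) ∣ a - b → ω ^ a = ω ^ b := by
    intro a b ⟨t, ht⟩
    have : a = b + (n : ℤ) * t := by linarith
    rw [this, zpow_add₀ hω0, zpow_mul, hωn, one_zpow, mul_one]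
  by_cases hk : (n : ℤ) ∣ k
  · -- g^k = 1; everything fixed; all ω powers are 1
    obtain ⟨t, ht⟩ := hk
    have hgk : g ^ k = 1 := by
      rw [ht, zpow_mul, zpow_natCast, hgn, one_zpow]
    have hcard : Nat.card {T : SSYTn μ n // (g ^ k) T = T}
        = Fintype.card (SSYTn μ n) := by
      rw [← Nat.card_eq_fintype_card]
      exact Nat.card_congr (Equiv.subtypeUnivEquiv (fun T => by rw [hgk]; rfl))
    have hone : ∀ s : ℤ, ω ^ (k * s) = 1 := fun s => by
      have : ω ^ (k * s) = ω ^ (0 : ℤ) :=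
        hcong _ _ ⟨t * s, by rw [ht]; ring⟩
      simpa using this
    rw [hcard]
    have : (∑ T : SSYTn μ n, ω ^ (k * ((∑ i : Fin n, (i : ℕ) * ssytContent μ n T i : ℕ) : ℤ)))
        = ∑ T : SSYTn μ n, (1 : ℂ) := Finset.sum_congr rfl fun T _ => hone _
    rw [this, Finset.sum_const, Finset.card_univ, nsmul_eq_mul, mul_one]
    rw [show -(k * (kappa μ : ℤ)) = k * (-(kappa μ : ℤ)) by ring, hone, one_mul]
  · -- no fixed points; sum is zero
    have hempty : IsEmpty {T : SSYTn μ n // (g ^ k) T = T} := by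
      refine ⟨fun ⟨T, hT⟩ => hk (fixed_dvd hn μ hgcd g hgn hg k T hT)⟩
    rw [Nat.card_of_isEmpty]
    set S : ℂ := ∑ T : SSYTn μ n,
        ω ^ (k * ((∑ i : Fin n, (i : ℕ) * ssytContent μ n T i : ℕ) : ℤ)) with hS
    have hshift : ω ^ (k * (μ.card : ℤ)) * S = S := by
      rw [hS, Finset.mul_sum]
      rw [← Equiv.sum_comp g (fun T : SSYTn μ n =>
        ω ^ (k * ((∑ i : Fin n, (i : ℕ) * ssytContent μ n T i : ℕ) : ℤ)))]
      refine Finset.sum_congr rfl fun T _ => ?_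
      rw [← zpow_add₀ hω0]
      refine (hcong _ _ ?_).symm
      have hmod : Nat.ModEq n (ssytW (g T)) (ssytW T + μ.card) := w_shift hn μ g hg T
      have hdvd : (n : ℤ) ∣ ((ssytW T + μ.card : ℕ) : ℤ) - ((ssytW (g T) : ℕ) : ℤ) :=
        hmod.dvd
      have : (k * ((ssytW (g T) : ℕ) : ℤ)) - (k * (μ.card : ℤ) + k * ((ssytW T : ℕ) : ℤ))
          = -(k * (((ssytW T + μ.card : ℕ) : ℤ) - ((ssytW (g T) : ℕ) : ℤ))) := by
        push_cast; ring
      show (n : ℤ) ∣ (k * (ssytW (g T) : ℤ)) - (k * (μ.card : ℤ) + k * ((ssytW T : ℕ) : ℤ))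
      rw [this]
      exact dvd_neg.mpr (dvd_mul_of_dvd_right hdvd k)
    have hne : ω ^ (k * (μ.card : ℤ)) ≠ 1 := by
      intro h1
      have hdvd : (n : ℤ) ∣ k * (μ.card : ℤ) := (hprim.zpow_eq_one_iff_dvd _).mp h1
      have hcop : IsCoprime ((n : ℕ) : ℤ) ((μ.card : ℕ) : ℤ) :=
        Nat.isCoprime_iff_coprime.mpr hgcd
      exact hk (hcop.dvd_of_dvd_mul_right hdvd)
    have hS0 : S = 0 := by
      by_contra h
      exact hne (mul_right_cancel₀ h (by rw [hshift, one_mul]))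
    rw [hS0, mul_zero]
    simp
end

section
/- Let λ be a partition with ℓ(λ) < n and gcd(n, |λ|) = 1, and let g : SSYT_n(λ) → SSYT_n(λ) be a bijection such that cont(g(T)) = c(cont(T)) for all T, where c is the cyclic shift. Then n divides the order of g as a permutation of the finite set SSYT_n(λ). -/
open Finset

section Aux

variable (μ : YoungDiagram) (n : ℕ)

/-- Sum of contents is the number of cells. -/
lemma ssytContent_sum (T : SSYTn μ n) : ∑ k : Fin n, ssytContent μ n T k = μ.card := by
  have h : μ.cells.card = ∑ m ∈ Finset.range n,
      (μ.cells.filter (fun c => T.1 c.1 c.2 = m)).card := by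
    apply Finset.card_eq_sum_card_fiberwise
    intro c hc
    exact Finset.mem_range.mpr (T.2 c.1 c.2 ((YoungDiagram.mem_cells _).mp hc))
  rw [YoungDiagram.card, h, ← Fin.sum_univ_eq_sum_range
    (fun m => (μ.cells.filter (fun c => T.1 c.1 c.2 = m)).card) n]
  rfl

lemma cycShift_succ {α : Type*} [NeZero n] (x : Fin n → α) (j : Fin n) :
    cycShift x (j + 1) = x j := by
  have hn : 0 < n := Nat.pos_of_ne_zero (NeZero.ne n)
  have hval : ((j + 1 : Fin n) : ℕ) = ((j : ℕ) + 1) % n := by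
    simp [Fin.add_def]
  unfold cycShift
  by_cases h : ((j + 1 : Fin n) : ℕ) = 0
  · have hj : (j : ℕ) = n - 1 := by
      rw [hval] at h
      have := j.isLt
      rcases Nat.lt_or_ge ((j:ℕ)+1) n with h1 | h1
      · rw [Nat.mod_eq_of_lt h1] at h; omega
      · omega
    rw [dif_pos h]
    congr 1
    exact Fin.ext hj.symm
  · rw [dif_neg h]
    have h1 : (j : ℕ) + 1 < n := by
      rw [hval] at h
      have := j.isLt
      rcases Nat.lt_or_ge ((j:ℕ)+1) n with h1 | h1
      · exact h1
      · have : (j:ℕ)+1 = n := by omega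
        simp [this] at h
    congr 1
    apply Fin.ext
    simp [hval, Nat.mod_eq_of_lt h1]

end Aux

theorem stmt11 (n : ℕ) (μ : YoungDiagram) (hlen : μ.colLen 0 < n)
    (hgcd : Nat.Coprime n μ.card)
    (g : Equiv.Perm (SSYTn μ n))
    (hg : ∀ T, ssytContent μ n (g T) = cycShift (ssytContent μ n T)) :
    n ∣ orderOf g := by
  have hn : 0 < n := Nat.lt_of_le_of_lt (Nat.zero_le _) hlen
  haveI : NeZero n := ⟨by omega⟩
  -- weighted content sum in ZMod n
  set f : SSYTn μ n → ZMod n := fun T => ∑ k : Fin n, ((k : ℕ) : ZMod n) * (ssytContent μ n T k : ZMod n) with hf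
  have hstep : ∀ T, f (g T) = f T + (μ.card : ZMod n) := by
    intro T
    have : f (g T) = ∑ k : Fin n, ((k : ℕ) : ZMod n) * ((cycShift (ssytContent μ n T) k : ℕ) : ZMod n) := by
      simp [hf, hg T]
    rw [this]
    rw [← Equiv.sum_comp (Equiv.addRight (1 : Fin n))
      (fun k => ((k : ℕ) : ZMod n) * ((cycShift (ssytContent μ n T) k : ℕ) : ZMod n))]
    have hpt : ∀ j : Fin n,
        (((Equiv.addRight (1 : Fin n) j : Fin n) : ℕ) : ZMod n) *
          ((cycShift (ssytContent μ n T) (Equiv.addRight (1 : Fin n) j) : ℕ) : ZMod n)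
        = (((j : ℕ) : ZMod n) + 1) * (ssytContent μ n T j : ZMod n) := by
      intro j
      have h1 : (Equiv.addRight (1 : Fin n) j : Fin n) = j + 1 := rfl
      rw [h1, cycShift_succ n (ssytContent μ n T) j]
      congr 1
      have : ((j + 1 : Fin n) : ℕ) = ((j : ℕ) + 1) % n := by simp [Fin.add_def]
      rw [this]
      push_cast [ZMod.natCast_mod]
      ring
    rw [Finset.sum_congr rfl (fun j _ => hpt j)]
    have : ∑ j : Fin n, (((j : ℕ) : ZMod n) + 1) * (ssytContent μ n T j : ZMod n)
        = f T + ∑ j : Fin n, (ssytContent μ n T j : ZMod n) := by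
      simp [hf, add_mul, Finset.sum_add_distrib]
    rw [this]
    congr 1
    rw [← Nat.cast_sum, ssytContent_sum]
  -- iterate
  have hiter : ∀ (m : ℕ) (T : SSYTn μ n), f ((g ^ m) T) = f T + (m : ZMod n) * (μ.card : ZMod n) := by
    intro m
    induction m with
    | zero => intro T; simp
    | succ m ih =>
      intro T
      have : (g ^ (m + 1)) T = g ((g ^ m) T) := by
        rw [pow_succ']
        rfl
      rw [this, hstep, ih]
      push_cast
      ring
  -- a witness tableau
  have hT0 : Nonempty (SSYTn μ n) := by
    refine ⟨⟨⟨fun i j => if (i, j) ∈ μ then i else 0, ?_, ?_, ?_⟩, ?_⟩⟩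
    · intro i j1 j2 hj hm
      have hm1 : (i, j1) ∈ μ := μ.up_left_mem le_rfl (le_of_lt hj) hm
      simp [hm, hm1]
    · intro i1 i2 j hi hm
      have hm1 : (i1, j) ∈ μ := μ.up_left_mem (le_of_lt hi) le_rfl hm
      simp only [hm, hm1, if_true]
      exact hi
    · intro i j hm
      exact if_neg hm
    · intro i j hm
      have h0 : i < μ.colLen j := YoungDiagram.mem_iff_lt_colLen.mp hm
      have h2 : μ.colLen j ≤ μ.colLen 0 := μ.colLen_anti 0 j (Nat.zero_le j)
      have h3 : i < n := lt_of_lt_of_le h0 (le_trans h2 (le_of_lt hlen))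
      show (if (i, j) ∈ μ then i else 0) < n
      rw [if_pos hm]
      exact h3
  obtain ⟨T0⟩ := hT0
  have h1 : (g ^ orderOf g) T0 = T0 := by
    rw [pow_orderOf_eq_one]; rfl
  have h2 := hiter (orderOf g) T0
  rw [h1] at h2
  have h3 : ((orderOf g * μ.card : ℕ) : ZMod n) = 0 := by
    push_cast
    have := h2
    linear_combination -this
  have h4 : n ∣ orderOf g * μ.card :=
    (ZMod.natCast_eq_zero_iff _ _).mp h3
  exact hgcd.dvd_of_dvd_mul_right h4
end

section
/- Let λ be a partition with ℓ(λ) < n and gcd(n, |λ|) = 1, and let g : SSYT_n(λ) → SSYT_n(λ) be a bijection such that cont(g(T)) = c(cont(T)) for all T, where c is the cyclic shift. Then for every T ∈ SSYT_n(λ), the ⟨g⟩-orbit of T has cardinality equal to n times the cardinality of the ⟨g^n⟩-orbit of T. -/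
open Finset

lemma periodic_mul {α : Type*} (f : ℕ → α) (d : ℕ) (hd : ∀ j, f (j + d) = f j) :
    ∀ k j, f (j + k * d) = f j := by
  intro k
  induction k with
  | zero => simp
  | succ k ih =>
    intro j
    have : j + (k + 1) * d = (j + d) + k * d := by ring
    rw [this, ih, hd]

lemma periodic_gcd (f : ℕ → ℕ) : ∀ (m n : ℕ), (∀ j, f (j + m) = f j) →
    (∀ j, f (j + n) = f j) → ∀ j, f (j + Nat.gcd m n) = f j := by
  intro m
  induction m using Nat.strong_induction_on with
  | _ m ih =>
    intro n hm hn j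
    rcases Nat.eq_zero_or_pos m with h0 | hpos
    · subst h0; simpa using hn j
    · rw [Nat.gcd_rec]
      refine ih (n % m) (Nat.mod_lt _ hpos) m ?_ hm j
      intro j
      have h1 : f (j + n % m + (n / m) * m) = f (j + n % m) := periodic_mul f m hm _ _
      have h2 : j + n % m + (n / m) * m = j + n := by
        have h3 := Nat.mod_add_div n m
        have h4 : (n / m) * m = m * (n / m) := Nat.mul_comm _ _
        omega
      rw [h2] at h1
      rw [← h1, hn]

lemma sum_periodic (f : ℕ → ℕ) (d : ℕ) (hd : ∀ j, f (j + d) = f j) :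
    ∀ k, ∑ j ∈ Finset.range (k * d), f j = k * ∑ j ∈ Finset.range d, f j := by
  intro k
  induction k with
  | zero => simp
  | succ k ih =>
    have h1 : (k + 1) * d = k * d + d := by ring
    have h2 : ∑ j ∈ Finset.Ico (k * d) (k * d + d), f j = ∑ j ∈ Finset.range d, f j := by
      rw [Finset.sum_Ico_eq_sum_range]
      have h3 : k * d + d - k * d = d := by omega
      rw [h3]
      refine Finset.sum_congr rfl fun j _ => ?_
      rw [Nat.add_comm, periodic_mul f d hd]
    rw [h1, Finset.range_eq_Ico,
      ← Finset.sum_Ico_consecutive _ (Nat.zero_le (k * d)) (Nat.le_add_right _ d),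
      h2, ← Finset.range_eq_Ico, ih]
    ring

lemma cycShift_apply {n : ℕ} {α : Type*} (hn : 0 < n) (x : Fin n → α) (i : Fin n) :
    cycShift x i = x ⟨(i.val + (n - 1)) % n, Nat.mod_lt _ hn⟩ := by
  unfold cycShift
  split_ifs with h
  · congr 1
    apply Fin.ext
    simp only [h]
    have : (0 + (n - 1)) % n = 0 + (n - 1) := Nat.mod_eq_of_lt (by omega)
    omega
  · congr 1
    apply Fin.ext
    have hi := i.isLt
    have h1 : i.val + (n - 1) = (i.val - 1) + 1 * n := by omega
    simp only [h1, Nat.add_mul_mod_self_right]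
    exact (Nat.mod_eq_of_lt (by omega)).symm

lemma cycShift_iterate {n : ℕ} {α : Type*} (hn : 0 < n) :
    ∀ (m : ℕ) (x : Fin n → α) (i : Fin n),
      (cycShift^[m] x) i = x ⟨(i.val + m * (n - 1)) % n, Nat.mod_lt _ hn⟩ := by
  intro m
  induction m with
  | zero =>
    intro x i
    simp only [Function.iterate_zero, id_eq, Nat.zero_mul, Nat.add_zero]
    congr 1
    exact (Fin.ext (Nat.mod_eq_of_lt i.isLt)).symm
  | succ m ih =>
    intro x i
    rw [Function.iterate_succ_apply, ih (cycShift x) i, cycShift_apply hn]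
    congr 1
    apply Fin.ext
    simp only [Nat.mod_add_mod]
    congr 1
    ring

lemma key_dvd (n m : ℕ) (hn : 0 < n) (x : Fin n → ℕ) (hx : cycShift^[m] x = x)
    (hcop : Nat.Coprime n (∑ i, x i)) : n ∣ m := by
  set f : ℕ → ℕ := fun j => x ⟨j % n, Nat.mod_lt _ hn⟩ with hf
  have hfn : ∀ j, f (j + n) = f j := by
    intro j
    simp only [hf, Nat.add_mod_right]
  have hfm : ∀ j, f (j + m * (n - 1)) = f j := by
    intro j
    have h1 := congrFun hx ⟨j % n, Nat.mod_lt _ hn⟩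
    rw [cycShift_iterate hn] at h1
    simp only [hf]
    rw [← h1]
    congr 1
    apply Fin.ext
    show (j + m * (n - 1)) % n = (j % n + m * (n - 1)) % n
    exact (Nat.mod_add_mod _ _ _).symm
  set d := Nat.gcd (m * (n - 1)) n with hd
  have hdper : ∀ j, f (j + d) = f j := periodic_gcd f _ _ hfm hfn
  have hdn : d ∣ n := Nat.gcd_dvd_right _ _
  obtain ⟨e, he⟩ := hdn
  have hsum : ∑ j ∈ Finset.range n, f j = ∑ i, x i := by
    rw [← Fin.sum_univ_eq_sum_range]
    exact Finset.sum_congr rfl (fun i _ => congrArg x (Fin.ext (Nat.mod_eq_of_lt i.isLt)))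
  have hn2 : n = e * d := by rw [he]; ring
  have he_dvd_s : e ∣ ∑ i, x i := by
    rw [← hsum, hn2, sum_periodic f d hdper e]
    exact Dvd.intro _ rfl
  have he_dvd_n : e ∣ n := ⟨d, by rw [he, Nat.mul_comm]⟩
  have he1 : e = 1 := by
    have h5 := Nat.dvd_gcd he_dvd_n he_dvd_s
    rw [Nat.Coprime.gcd_eq_one hcop] at h5
    exact Nat.dvd_one.mp h5
  have hnd : n = d := by rw [he, he1, Nat.mul_one]
  have hnd2 : n ∣ m * (n - 1) := (dvd_of_eq hnd).trans (Nat.gcd_dvd_left _ _)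
  have hcop2 : Nat.Coprime n (n - 1) := by
    have h1 : Nat.gcd n (n - 1) ∣ n - (n - 1) := Nat.dvd_sub (Nat.gcd_dvd_left _ _) (Nat.gcd_dvd_right _ _)
    have h2 : n - (n - 1) = 1 := by omega
    rw [h2] at h1
    exact Nat.dvd_one.mp h1
  exact hcop2.dvd_of_dvd_mul_right hnd2
lemma sum_content (μ : YoungDiagram) (n : ℕ) (hn : 0 < n) (T : SSYTn μ n) :
    ∑ k : Fin n, ssytContent μ n T k = μ.card := by
  have h := Finset.card_eq_sum_card_fiberwise
    (f := fun c : ℕ × ℕ => (⟨T.1 c.1 c.2 % n, Nat.mod_lt _ hn⟩ : Fin n))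
    (s := μ.cells) (t := Finset.univ) (fun c _ => Finset.mem_univ _)
  show _ = μ.cells.card
  rw [h]
  refine Finset.sum_congr rfl fun k _ => ?_
  unfold ssytContent
  congr 1
  refine (Finset.filter_congr fun c hc => ?_).symm
  have hcm : T.1 c.1 c.2 < n := T.2 c.1 c.2 ((YoungDiagram.mem_cells _).mp hc)
  rw [Fin.ext_iff]
  simp only [Nat.mod_eq_of_lt hcm]

theorem stmt12 (n : ℕ) (μ : YoungDiagram) (hlen : μ.colLen 0 < n)
    (hgcd : Nat.Coprime n μ.card)
    (g : Equiv.Perm (SSYTn μ n))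
    (hg : ∀ T, ssytContent μ n (g T) = cycShift (ssytContent μ n T)) :
    ∀ T : SSYTn μ n,
      (Set.range fun k : ℤ => (g ^ k) T).ncard
        = n * (Set.range fun k : ℤ => ((g ^ n) ^ k) T).ncard := by
  have hn : 0 < n := by omega
  -- content of powers
  have cont_pow : ∀ (k : ℕ) (T : SSYTn μ n),
      ssytContent μ n ((g ^ k) T) = cycShift^[k] (ssytContent μ n T) := by
    intro k
    induction k with
    | zero => intro T; simp
    | succ k ih =>
      intro T
      have h1 : (g ^ (k + 1)) T = g ((g ^ k) T) := by
        rw [pow_succ' g k]; rfl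
      rw [h1, hg, ih, Function.iterate_succ_apply']
  -- orbit sets are orbits of zpowers
  have horb : ∀ (h : Equiv.Perm (SSYTn μ n)) (T : SSYTn μ n),
      (Set.range fun k : ℤ => (h ^ k) T) = MulAction.orbit (Subgroup.zpowers h) T := by
    intro h T
    ext y
    constructor
    · rintro ⟨k, rfl⟩
      exact MulAction.mem_orbit_iff.mpr ⟨⟨h ^ k, ⟨k, rfl⟩⟩, rfl⟩
    · rintro ⟨⟨w, k, rfl⟩, rfl⟩
      exact ⟨k, rfl⟩
  -- orbit cardinality via minimalPeriod
  have hcard : ∀ (h : Equiv.Perm (SSYTn μ n)) (T : SSYTn μ n),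
      (Set.range fun k : ℤ => (h ^ k) T).ncard
        = Function.minimalPeriod (h • ·) T := by
    intro h T
    rw [horb h T, ← Nat.card_coe_set_eq,
      Nat.card_congr (MulAction.orbitZPowersEquiv h T), Nat.card_zmod]
  intro T
  set m := Function.minimalPeriod (g • ·) T with hm
  have hper : T ∈ Function.periodicPts (g • ·) := by
    refine Function.mk_mem_periodicPts (orderOf_pos g) ?_
    show (g • ·)^[orderOf g] T = T
    rw [smul_iterate, pow_orderOf_eq_one]
    rfl
  have hmpos : 0 < m := Function.minimalPeriod_pos_of_mem_periodicPts hper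
  -- n divides m
  have hfix : (g ^ m) T = T := by
    have h1 : (g • ·)^[m] T = T := Function.iterate_minimalPeriod
    rwa [smul_iterate] at h1
  have hcyc : cycShift^[m] (ssytContent μ n T) = ssytContent μ n T := by
    rw [← cont_pow m T, hfix]
  have hdvd : n ∣ m := by
    refine key_dvd n m hn (ssytContent μ n T) hcyc ?_
    rwa [sum_content μ n hn T]
  -- minimal period of g^n
  have hiter : ((g ^ n) • · : SSYTn μ n → SSYTn μ n) = (g • ·)^[n] := by
    rw [smul_iterate]
  have hmg : Function.minimalPeriod ((g ^ n) • ·) T = m / n := by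
    rw [hiter, Function.minimalPeriod_iterate_eq_div_gcd' hper, ← hm,
      Nat.gcd_comm, Nat.gcd_eq_left hdvd]
  rw [hcard g T, hcard (g ^ n) T, hmg, ← hm, Nat.mul_div_cancel' hdvd]
end
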